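/- Let A and B be dual Banach algebras and θ : A → B a continuous surjective algebra homomorphism that is also weak*-continuous. If A is Johnson pseudo-Connes amenable, then B is Johnson pseudo-Connes amenable. -/

import Mathlib

open Filter Topology ContinuousLinearMap

set_option maxHeartbeats 1000000
set_option linter.unusedVariables false
set_option linter.unusedSectionVars false
set_option synthInstance.maxHeartbeats 200000

noncomputable section

section DualBanach

variable {A : Type*} [NonUnitalNormedRing A] [NormedSpace ℂ A]
  [IsScalarTower ℂ A A] [SMulCommClass ℂ A A]

/-- Left multiplication `x ↦ a * x` as a continuous linear map. -/
def mulL (a : A) : A →L[ℂ] A := ContinuousLinearMap.mul ℂ A a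

/-- Right multiplication `x ↦ x * a` as a continuous linear map. -/
def mulR (a : A) : A →L[ℂ] A := (ContinuousLinearMap.mul ℂ A).flip a

@[simp] lemma mulL_apply (a x : A) : mulL a x = a * x := rfl
@[simp] lemma mulR_apply (a x : A) : mulR a x = x * a := rfl

/-- The canonical evaluation of `a : A` on a submodule of the dual, giving a
functional on that submodule. -/
def evalOn (S : Submodule ℂ (A →L[ℂ] ℂ)) (a : A) : S →L[ℂ] ℂ :=
  (ContinuousLinearMap.apply ℂ ℂ a).comp S.subtypeL

/-- A dual Banach algebra structure on `A`: a closed submodule `carrier` of the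
dual `A⋆` (closed under the module actions) such that `A` is canonically
isometrically isomorphic to the dual of `carrier`. -/
structure DualStructure (A : Type*) [NonUnitalNormedRing A] [NormedSpace ℂ A]
    [IsScalarTower ℂ A A] [SMulCommClass ℂ A A] where
  carrier : Submodule ℂ (A →L[ℂ] ℂ)
  isClosed' : IsClosed (carrier : Set (A →L[ℂ] ℂ))
  lact_mem' : ∀ (a : A) (f : A →L[ℂ] ℂ), f ∈ carrier → f.comp (mulR a) ∈ carrier
  ract_mem' : ∀ (a : A) (f : A →L[ℂ] ℂ), f ∈ carrier → f.comp (mulL a) ∈ carrier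
  bijective' : Function.Bijective (fun a : A => evalOn carrier a)
  isometry' : ∀ a : A,
    sSup {r : ℝ | ∃ f : A →L[ℂ] ℂ, f ∈ carrier ∧ ‖f‖ ≤ 1 ∧ r = ‖f a‖} = ‖a‖

/-- `A`, regarded with its weak-star topology `σ(A, A_*)`. -/
def WkA (P : DualStructure A) : Type _ := A

/-- The identity map `WkA P → A`. -/
def WkA.un (P : DualStructure A) : WkA P → A := fun a => a

/-- The identity map `A → WkA P`. -/
def WkA.mk (P : DualStructure A) : A → WkA P := fun a => a

instance (P : DualStructure A) : TopologicalSpace (WkA P) :=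
  TopologicalSpace.induced
    (fun a => fun f : P.carrier => (f : A →L[ℂ] ℂ) (WkA.un P a)) inferInstance

/-- Weak-star continuity of a map out of a dual Banach algebra. -/
def WkCont (P : DualStructure A) {E : Type*} [TopologicalSpace E] (g : A → E) : Prop :=
  Continuous fun a : WkA P => g (WkA.un P a)

/-- The dual of the projective tensor product `A ⊗̂ A`, realized as the space of
bounded bilinear functionals on `A × A`. -/
abbrev TDual (A : Type*) [NonUnitalNormedRing A] [NormedSpace ℂ A]
    [IsScalarTower ℂ A A] [SMulCommClass ℂ A A] := A →L[ℂ] A →L[ℂ] ℂ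

/-- The left action `a · T` of `A` on `(A ⊗̂ A)⋆`: `(a·T)(b ⊗ c) = T(b ⊗ ca)`. -/
def lactOp (a : A) : TDual A →L[ℂ] TDual A :=
  compL ℂ A (A →L[ℂ] ℂ) (A →L[ℂ] ℂ) ((compL ℂ A A ℂ).flip (mulR a))

/-- The right action `T · a` of `A` on `(A ⊗̂ A)⋆`: `(T·a)(b ⊗ c) = T(ab ⊗ c)`. -/
def ractOp (a : A) : TDual A →L[ℂ] TDual A :=
  (compL ℂ A A (A →L[ℂ] ℂ)).flip (mulL a)

@[simp] lemma lactOp_apply (a : A) (T : TDual A) (b c : A) :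
    lactOp a T b c = T b (c * a) := rfl

@[simp] lemma ractOp_apply (a : A) (T : TDual A) (b c : A) :
    ractOp a T b c = T (a * b) c := rfl

/-- `σwc((A ⊗̂ A)⋆)`: the set of bilinear functionals `T` for which both
`a ↦ a·T` and `a ↦ T·a` are weak-star–weak continuous. -/
def sigmaWC (P : DualStructure A) : Set (TDual A) :=
  {T | ∀ Φ : TDual A →L[ℂ] ℂ,
    WkCont P (fun a => Φ (lactOp a T)) ∧ WkCont P (fun a => Φ (ractOp a T))}

/-- `σwc((A ⊗̂ A)⋆)` as a submodule. -/
def sigmaWCsub (P : DualStructure A) : Submodule ℂ (TDual A) where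
  carrier := sigmaWC P
  zero_mem' := by
    intro Φ
    constructor <;>
    · show Continuous _
      have : (fun x : WkA P => Φ ((0 : TDual A →L[ℂ] TDual A) 0)) = fun _ => (0 : ℂ) := by
        funext x; simp
      simp only [map_zero]
      exact continuous_const
  add_mem' := by
    intro T S hT hS Φ
    constructor
    · have h := ((hT Φ).1).add ((hS Φ).1)
      show Continuous _
      convert h using 1; funext x; simp [map_add]
    · have h := ((hT Φ).2).add ((hS Φ).2)
      show Continuous _
      convert h using 1; funext x; simp [map_add]
  smul_mem' := by
    intro c T hT Φ
    constructor
    · have h := ((hT Φ).1).const_smul c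
      show Continuous _
      convert h using 1; funext x; simp [map_smul]
    · have h := ((hT Φ).2).const_smul c
      show Continuous _
      convert h using 1; funext x; simp [map_smul]

lemma wkCont_of_mem (P : DualStructure A) {f : A →L[ℂ] ℂ} (hf : f ∈ P.carrier) :
    WkCont P (fun a => f a) := by
  have h1 : Continuous fun a : WkA P =>
      (fun g : P.carrier => (g : A →L[ℂ] ℂ) (WkA.un P a)) := continuous_induced_dom
  exact (continuous_apply (⟨f, hf⟩ : P.carrier)).comp h1

lemma wkCont_mulL (P : DualStructure A) (a : A) :
    Continuous fun x : WkA P => WkA.mk P (a * WkA.un P x) := by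
  apply continuous_induced_rng.2
  apply continuous_pi
  intro g
  exact wkCont_of_mem P (P.ract_mem' a g.1 g.2)

lemma wkCont_mulR (P : DualStructure A) (a : A) :
    Continuous fun x : WkA P => WkA.mk P (WkA.un P x * a) := by
  apply continuous_induced_rng.2
  apply continuous_pi
  intro g
  exact wkCont_of_mem P (P.lact_mem' a g.1 g.2)

lemma ract_mem_sigmaWC (P : DualStructure A) {T : TDual A}
    (hT : T ∈ sigmaWC P) (a : A) : ractOp a T ∈ sigmaWC P := by
  intro Φ
  constructor
  · have key : ∀ a' : A, lactOp a' (ractOp a T) = ractOp a (lactOp a' T) := by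
      intro a'; ext b c; simp
    have h := (hT (Φ.comp (ractOp a))).1
    show Continuous _
    have h' : Continuous _ := h
    convert h' using 1; funext x; exact congrArg Φ (key _)
  · have key : ∀ a' : A, ractOp a' (ractOp a T) = ractOp (a * a') T := by
      intro a'; ext b c; simp [mul_assoc]
    have h := ((hT Φ).2).comp (wkCont_mulL P a)
    show Continuous _
    have h' : Continuous _ := h
    convert h' using 1; funext x; exact congrArg Φ (key _)

lemma lact_mem_sigmaWC (P : DualStructure A) {T : TDual A}
    (hT : T ∈ sigmaWC P) (a : A) : lactOp a T ∈ sigmaWC P := by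
  intro Φ
  constructor
  · have key : ∀ a' : A, lactOp a' (lactOp a T) = lactOp (a' * a) T := by
      intro a'; ext b c; simp [mul_assoc]
    have h := ((hT Φ).1).comp (wkCont_mulR P a)
    show Continuous _
    have h' : Continuous _ := h
    convert h' using 1; funext x; exact congrArg Φ (key _)
  · have key : ∀ a' : A, ractOp a' (lactOp a T) = lactOp a (ractOp a' T) := by
      intro a'; ext b c; simp
    have h := (hT (Φ.comp (lactOp a))).2
    show Continuous _
    have h' : Continuous _ := h
    convert h' using 1; funext x; exact congrArg Φ (key _)

/-- The adjoint of the multiplication map `π : A ⊗̂ A → A` applied to a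
functional: `π⋆(f)(b ⊗ c) = f (b c)`. -/
def piStar (f : A →L[ℂ] ℂ) : TDual A :=
  (compL ℂ A A ℂ f).comp (ContinuousLinearMap.mul ℂ A)

@[simp] lemma piStar_apply (f : A →L[ℂ] ℂ) (b c : A) : piStar f b c = f (b * c) := rfl

/-- Johnson pseudo-Connes amenability of a dual Banach algebra: there is a (not
necessarily bounded) net `(m i)` in `(A ⊗̂ A)⋆⋆` such that
`⟨T, a·mᵢ⟩ = ⟨T, mᵢ·a⟩` for all `T ∈ σwc((A ⊗̂ A)⋆)` and
`i⋆_{A_*} π⋆⋆(mᵢ) a → a` in norm for every `a`; the element `b i ∈ A`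
represents `i⋆_{A_*} π⋆⋆(mᵢ)` via `f (b i) = mᵢ (π⋆ f)` for all `f ∈ A_*`. -/
def IsJPCA (P : DualStructure A) : Prop :=
  ∃ (ι : Type) (pr : Preorder ι), Nonempty ι ∧
    (∀ i j : ι, ∃ k, pr.le i k ∧ pr.le j k) ∧
    ∃ (m : ι → (TDual A →L[ℂ] ℂ)) (b : ι → A),
      (∀ i (a : A), ∀ T ∈ sigmaWC P, m i (ractOp a T) = m i (lactOp a T)) ∧
      (∀ i, ∀ f ∈ P.carrier, f (b i) = m i (piStar f)) ∧
      (∀ a : A, Tendsto (fun i => b i * a) (@Filter.atTop ι pr) (nhds a))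

end DualBanach

section Statements

variable {A : Type*} [NonUnitalNormedRing A] [NormedSpace ℂ A]
  [IsScalarTower ℂ A A] [SMulCommClass ℂ A A]
variable {B : Type*} [NonUnitalNormedRing B] [NormedSpace ℂ B]
  [IsScalarTower ℂ B B] [SMulCommClass ℂ B B]

/-! The net `(mᵢ, bᵢ)` witnessing Johnson pseudo-Connes amenability of `A` is pushed forward
to `(mᵢ ∘ (θ ⊗ θ)⋆, θ bᵢ)`. Multiplicativity of `θ` makes `(θ ⊗ θ)⋆` intertwine the module
actions and `π⋆`; weak-star continuity of `θ` makes `(θ ⊗ θ)⋆` map `σwc((B ⊗̂ B)⋆)` into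
`σwc((A ⊗̂ A)⋆)` and `g ∘ θ` lie in `A_*` for `g ∈ B_*`; surjectivity of `θ` lets the
identities checked on `θ a` cover all of `B`. -/

lemma mem_carrier_of_wkCont (P : DualStructure A) {f : A →L[ℂ] ℂ}
    (hf : WkCont P fun a => f a) : f ∈ P.carrier := by
  have hspan : f.toLinearMap ∈
      Submodule.span ℂ (Set.range fun φ : P.carrier => (φ : A →L[ℂ] ℂ).toLinearMap) := by
    rw [LinearMap.mem_span_iff_continuous, ← induced_to_pi]
    exact hf
  have hle : Submodule.span ℂ (Set.range fun φ : P.carrier => (φ : A →L[ℂ] ℂ).toLinearMap) ≤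
      P.carrier.map (ContinuousLinearMap.coeLM ℂ) := by
    rw [Submodule.span_le]
    rintro _ ⟨φ, rfl⟩
    exact ⟨φ, φ.2, rfl⟩
  obtain ⟨g, hg, hgf⟩ := hle hspan
  rwa [← ContinuousLinearMap.coe_inj.mp hgf]

lemma comp_mem_carrier (P : DualStructure A) (Q : DualStructure B) {θ : A →L[ℂ] B}
    (hwk : Continuous fun a : WkA P => WkA.mk Q (θ (WkA.un P a)))
    {g : B →L[ℂ] ℂ} (hg : g ∈ Q.carrier) : g.comp θ ∈ P.carrier :=
  mem_carrier_of_wkCont P ((wkCont_of_mem Q hg).comp hwk)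

/-- `(θ ⊗ θ)⋆ : (B ⊗̂ B)⋆ → (A ⊗̂ A)⋆`. -/
def TDual.comap (θ : A →L[ℂ] B) : TDual B →L[ℂ] TDual A :=
  compL ℂ A (B →L[ℂ] ℂ) (A →L[ℂ] ℂ) ((compL ℂ A B ℂ).flip θ) ∘L
    (compL ℂ A B (B →L[ℂ] ℂ)).flip θ

@[simp] lemma TDual.comap_apply (θ : A →L[ℂ] B) (T : TDual B) (x y : A) :
    TDual.comap θ T x y = T (θ x) (θ y) := rfl

lemma TDual.comap_lactOp {θ : A →L[ℂ] B} (hmul : ∀ a b : A, θ (a * b) = θ a * θ b)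
    (a : A) (T : TDual B) :
    TDual.comap θ (lactOp (θ a) T) = lactOp a (TDual.comap θ T) := by
  ext x y; simp [hmul]

lemma TDual.comap_ractOp {θ : A →L[ℂ] B} (hmul : ∀ a b : A, θ (a * b) = θ a * θ b)
    (a : A) (T : TDual B) :
    TDual.comap θ (ractOp (θ a) T) = ractOp a (TDual.comap θ T) := by
  ext x y; simp [hmul]

lemma TDual.comap_piStar {θ : A →L[ℂ] B} (hmul : ∀ a b : A, θ (a * b) = θ a * θ b)
    (g : B →L[ℂ] ℂ) :
    TDual.comap θ (piStar g) = piStar (g.comp θ) := by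
  ext x y; simp [hmul]

lemma TDual.comap_mem_sigmaWC {θ : A →L[ℂ] B} (hmul : ∀ a b : A, θ (a * b) = θ a * θ b)
    {P : DualStructure A} {Q : DualStructure B}
    (hwk : Continuous fun a : WkA P => WkA.mk Q (θ (WkA.un P a)))
    {T : TDual B} (hT : T ∈ sigmaWC Q) : TDual.comap θ T ∈ sigmaWC P := fun Φ =>
  ⟨((hT (Φ.comp (TDual.comap θ))).1.comp hwk).congr fun a =>
      congrArg Φ (TDual.comap_lactOp hmul (WkA.un P a) T),
    ((hT (Φ.comp (TDual.comap θ))).2.comp hwk).congr fun a =>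
      congrArg Φ (TDual.comap_ractOp hmul (WkA.un P a) T)⟩

theorem johnsonPseudoConnesAmenable_of_epimorphism_general
    (P : DualStructure A) (Q : DualStructure B)
    (θ : A →L[ℂ] B)
    (hmul : ∀ a b : A, θ (a * b) = θ a * θ b)
    (hsurj : Function.Surjective θ)
    (hwk : Continuous fun a : WkA P => WkA.mk Q (θ (WkA.un P a)))
    (h : IsJPCA P) : IsJPCA Q := by
  obtain ⟨ι, pr, hne, hdir, m, b, hcomm, hrep, hconv⟩ := h
  refine ⟨ι, pr, hne, hdir, fun i => (m i).comp (TDual.comap θ), fun i => θ (b i), ?_, ?_, ?_⟩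
  · intro i b' T hT
    obtain ⟨a, rfl⟩ := hsurj b'
    simpa only [comp_apply, TDual.comap_ractOp hmul, TDual.comap_lactOp hmul] using
      hcomm i a _ (TDual.comap_mem_sigmaWC hmul hwk hT)
  · intro i g hg
    simpa only [comp_apply, TDual.comap_piStar hmul] using
      hrep i _ (comp_mem_carrier P Q hwk hg)
  · intro b'
    obtain ⟨a, rfl⟩ := hsurj b'
    simpa only [Function.comp_def, hmul] using (θ.continuous.tendsto a).comp (hconv a)

/-- Let `A` and `B` be dual Banach algebras and
`θ : A → B` a continuous surjective algebra homomorphism which is also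
weak-star–weak-star continuous.  If `A` is Johnson pseudo-Connes amenable,
then so is `B`. -/
theorem johnsonPseudoConnesAmenable_of_epimorphism
    [CompleteSpace A] [CompleteSpace B]
    (P : DualStructure A) (Q : DualStructure B)
    (θ : A →L[ℂ] B)
    (hmul : ∀ a b : A, θ (a * b) = θ a * θ b)
    (hsurj : Function.Surjective θ)
    (hwk : Continuous fun a : WkA P => WkA.mk Q (θ (WkA.un P a)))
    (h : IsJPCA P) : IsJPCA Q :=
  johnsonPseudoConnesAmenable_of_epimorphism_general P Q θ hmul hsurj hwk h

end Statements
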